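/- Let ℬ denote the set of all Banach limits, viewed as a subset of the dual space of ℓ∞, and let Ext(ℬ) be its set of extreme points. Then every sequence (Bₖ) of pairwise distinct points of Ext(ℬ) is 1-equivalent to the unit vector basis of ℓ₁: for every n and all real scalars a₁, …, aₙ, ‖Σₖ₌₁ⁿ aₖ Bₖ‖ = Σₖ₌₁ⁿ |aₖ|, where the norm is the dual norm on (ℓ∞)*. -/

import Mathlib

noncomputable section
open scoped ENNReal

/-- `ℓ∞`: the Banach space of bounded real sequences with the sup norm. -/
abbrev Linf : Type := lp (fun _ : ℕ => ℝ) ∞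

/-- The left shift `(x₁,x₂,x₃,…) ↦ (x₂,x₃,x₄,…)` on `ℓ∞`. -/
def shiftSeq (x : Linf) : Linf :=
  ⟨fun n => x (n + 1), memℓp_infty ⟨‖x‖, by
    rintro r ⟨n, rfl⟩
    exact lp.norm_apply_le_norm ENNReal.top_ne_zero x (n + 1)⟩⟩

/-- The constant sequence `e = (1,1,1,…)` in `ℓ∞`. -/
def onesSeq : Linf :=
  ⟨fun _ => 1, memℓp_infty ⟨1, by rintro r ⟨n, rfl⟩; simp⟩⟩

/-- A Banach limit: a positive, shift-invariant continuous linear functional `L` on `ℓ∞`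
with `L(1,1,1,…) = 1`. -/
def IsBanachLimit (L : StrongDual ℝ Linf) : Prop :=
  (∀ x : Linf, (∀ n, 0 ≤ x n) → 0 ≤ L x) ∧
  (∀ x : Linf, L (shiftSeq x) = L x) ∧
  L onesSeq = 1

/-!
Two distinct extreme Banach limits `φ`, `ψ` are disjoint. Their infimum `ν = φ ⊓ ψ` in the order
dual of `ℓ∞`, given on `x ≥ 0` by the Riesz–Kantorovich formula
`inf {φ y + ψ (x - y) | 0 ≤ y ≤ x}`, is positive and shift-invariant. If `c = ν 1` were positive,
then `φ = c • (ν / c) + (1 - c) • ((φ - ν) / (1 - c))` would exhibit `φ` inside a segment of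
Banach limits, so extremality forces `φ = ν / c`, and likewise `ψ = ν / c`. Hence `ν 1 = 0`: for
every `δ > 0` some `0 ≤ w ≤ 1` has `φ w > 1 - δ` and `ψ w < δ`.

For finitely many distinct extreme points `B k`, these separating elements combine into
`v k ≥ 0` with `∑ v k ≤ 1` and `B k (v k) ≈ 1`. Testing `∑ a k • B k` on `∑ sign (a k) • v k`
gives `‖∑ a k • B k‖ ≥ ∑ |a k|`, and `‖B k‖ ≤ 1` gives the reverse inequality.
-/

open Set Pointwise

theorem le_of_forall_pos_one_sub_mul_le {a b : ℝ} (h : ∀ η > 0, (1 - η) * a ≤ b) : a ≤ b := by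
  have hlim : Filter.Tendsto (fun η : ℝ => (1 - η) * a) (nhdsWithin 0 (Ioi 0)) (nhds a) := by
    have := ((continuous_const.sub continuous_id).mul continuous_const).tendsto (0 : ℝ)
      (f := fun η : ℝ => (1 - η) * a)
    simpa using this.mono_left nhdsWithin_le_nhds
  exact le_of_tendsto hlim (eventually_nhdsWithin_of_forall h)

theorem Finset.sum_max_sub_sum_erase_le_one {ι : Type*} [DecidableEq ι] (s : Finset ι)
    {u : ι → ℝ} (h0 : ∀ k ∈ s, 0 ≤ u k) (h1 : ∀ k ∈ s, u k ≤ 1) :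
    ∑ k ∈ s, max (u k - ∑ j ∈ s.erase k, u j) 0 ≤ 1 := by
  by_cases h : ∃ k ∈ s, 0 < u k - ∑ j ∈ s.erase k, u j
  · obtain ⟨k, hk, hpos⟩ := h
    -- at most one `u k` can exceed the sum of all the others
    rw [Finset.sum_eq_single_of_mem k hk fun j hj hjk => max_eq_right ?_]
    · have : 0 ≤ ∑ j ∈ s.erase k, u j :=
        Finset.sum_nonneg fun j hj => h0 j (Finset.mem_of_mem_erase hj)
      exact max_le (by linarith [h1 k hk]) zero_le_one
    · have hkj := Finset.single_le_sum (fun i hi => h0 i (Finset.mem_of_mem_erase hi))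
        (Finset.mem_erase.2 ⟨hjk.symm, hk⟩)
      have hjk' := Finset.single_le_sum (fun i hi => h0 i (Finset.mem_of_mem_erase hi))
        (Finset.mem_erase.2 ⟨hjk, hj⟩)
      linarith
  · simp only [not_exists, not_and, not_lt] at h
    rw [Finset.sum_eq_zero fun k hk => max_eq_right (h k hk)]
    exact zero_le_one

theorem Finset.sum_erase_le_card_mul {ι : Type*} [DecidableEq ι] {s : Finset ι} {k : ι}
    {f : ι → ℝ} {δ : ℝ} (hδ : 0 ≤ δ) (h : ∀ j ∈ s.erase k, f j ≤ δ) :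
    ∑ j ∈ s.erase k, f j ≤ s.card * δ := by
  refine (Finset.sum_le_card_nsmul _ _ δ h).trans ?_
  rw [nsmul_eq_mul]
  exact mul_le_mul_of_nonneg_right (by exact_mod_cast Finset.card_erase_le) hδ

section RieszSpace

variable {E : Type*} [AddCommGroup E] [Lattice E]

section Ordered

variable [IsOrderedAddMonoid E]

theorem Set.Icc_zero_add_Icc_zero {x y : E} (hx : 0 ≤ x) (hy : 0 ≤ y) :
    Icc 0 x + Icc 0 y = Icc 0 (x + y) := by
  refine (zero_add (0 : E) ▸ Icc_add_Icc_subset 0 x 0 y).antisymm ?_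
  rintro z ⟨hz, hzxy⟩
  refine ⟨z ⊓ x, ⟨le_inf hz hx, inf_le_right⟩, z - z ⊓ x, ⟨sub_nonneg.2 inf_le_left, ?_⟩,
    add_sub_cancel _ _⟩
  rw [sub_inf, sub_self]
  exact sup_le hy (sub_le_iff_le_add'.2 hzxy)

theorem map_posPart_sub_map_negPart_sub {F : Type*} [AddCommGroup F] (m : E → F)
    (hadd : ∀ x y, 0 ≤ x → 0 ≤ y → m (x + y) = m x + m y) {u v : E} (hu : 0 ≤ u) (hv : 0 ≤ v) :
    m (u - v)⁺ - m (u - v)⁻ = m u - m v := by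
  have h : u + (u - v)⁻ = (u - v)⁺ + v :=
    sub_eq_sub_iff_add_eq_add.1 (posPart_sub_negPart (u - v)).symm
  rw [sub_eq_sub_iff_add_eq_add, ← hadd _ _ hu (negPart_nonneg _), h,
    hadd _ _ (posPart_nonneg _) hv]

end Ordered

variable [Module ℝ E]

namespace PositiveLinearMap

variable (φ ψ : E →ₚ[ℝ] ℝ)

/-- The numbers `φ y + ψ (x - y)` for `0 ≤ y ≤ x`; for `x ≥ 0` their infimum is the value at `x`
of the infimum of `φ` and `ψ` in the order of functionals (Riesz–Kantorovich formula). -/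
def infCandidates (x : E) : Set ℝ := (fun y => φ y + ψ (x - y)) '' Icc 0 x

variable {φ ψ}

theorem infCandidates_nonempty {x : E} (hx : 0 ≤ x) : (φ.infCandidates ψ x).Nonempty :=
  ⟨_, 0, ⟨le_rfl, hx⟩, rfl⟩

theorem infCandidates_smul [PosSMulMono ℝ E] {c : ℝ} (hc : 0 < c) (x : E) :
    φ.infCandidates ψ (c • x) = c • φ.infCandidates ψ x := by
  ext r
  simp only [infCandidates, mem_smul_set, mem_image, mem_Icc]
  constructor
  · rintro ⟨y, ⟨hy, hyx⟩, rfl⟩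
    refine ⟨_, ⟨c⁻¹ • y, ⟨smul_nonneg (inv_nonneg.2 hc.le) hy, ?_⟩, rfl⟩, ?_⟩
    · simpa [smul_smul, inv_mul_cancel₀ hc.ne'] using smul_le_smul_of_nonneg_left hyx
        (inv_nonneg.2 hc.le)
    · simp only [map_sub, map_smul, smul_eq_mul]
      field_simp
  · rintro ⟨_, ⟨y, ⟨hy, hyx⟩, rfl⟩, rfl⟩
    refine ⟨c • y, ⟨smul_nonneg hc.le hy, smul_le_smul_of_nonneg_left hyx hc.le⟩, ?_⟩
    simp [← smul_sub, mul_add]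

theorem sInf_infCandidates_smul [PosSMulMono ℝ E] {c : ℝ} (hc : 0 ≤ c) (x : E) :
    sInf (φ.infCandidates ψ (c • x)) = c • sInf (φ.infCandidates ψ x) := by
  rcases hc.eq_or_lt with rfl | hc
  · simp [infCandidates]
  · rw [infCandidates_smul hc, Real.sInf_smul_of_nonneg hc.le]

variable [IsOrderedAddMonoid E]

theorem infCandidates_nonneg {x : E} {r : ℝ} (hr : r ∈ φ.infCandidates ψ x) : 0 ≤ r := by
  obtain ⟨y, ⟨hy, hyx⟩, rfl⟩ := hr
  exact add_nonneg (map_nonneg φ hy) (map_nonneg ψ (sub_nonneg.2 hyx))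

theorem bddBelow_infCandidates (x : E) : BddBelow (φ.infCandidates ψ x) :=
  ⟨0, fun _ => infCandidates_nonneg⟩

theorem sInf_infCandidates_le {x y : E} (hy : y ∈ Icc 0 x) :
    sInf (φ.infCandidates ψ x) ≤ φ y + ψ (x - y) :=
  csInf_le (bddBelow_infCandidates x) ⟨y, hy, rfl⟩

theorem sInf_infCandidates_nonneg {x : E} (hx : 0 ≤ x) : 0 ≤ sInf (φ.infCandidates ψ x) :=
  le_csInf (infCandidates_nonempty hx) fun _ => infCandidates_nonneg

theorem infCandidates_add {x x' : E} (hx : 0 ≤ x) (hx' : 0 ≤ x') :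
    φ.infCandidates ψ (x + x') = φ.infCandidates ψ x + φ.infCandidates ψ x' := by
  ext r
  simp only [infCandidates, ← Icc_zero_add_Icc_zero hx hx', mem_image, mem_add]
  constructor
  · rintro ⟨_, ⟨y, hy, y', hy', rfl⟩, rfl⟩
    refine ⟨_, ⟨y, hy, rfl⟩, _, ⟨y', hy', rfl⟩, ?_⟩
    rw [map_add, add_sub_add_comm, map_add]
    abel
  · rintro ⟨_, ⟨y, hy, rfl⟩, _, ⟨y', hy', rfl⟩, rfl⟩
    refine ⟨_, ⟨y, hy, y', hy', rfl⟩, ?_⟩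
    rw [map_add, add_sub_add_comm, map_add]
    abel

theorem sInf_infCandidates_add {x x' : E} (hx : 0 ≤ x) (hx' : 0 ≤ x') :
    sInf (φ.infCandidates ψ (x + x')) =
      sInf (φ.infCandidates ψ x) + sInf (φ.infCandidates ψ x') := by
  rw [infCandidates_add hx hx', csInf_add (infCandidates_nonempty hx) (bddBelow_infCandidates x)
    (infCandidates_nonempty hx') (bddBelow_infCandidates x')]

end PositiveLinearMap

variable [IsOrderedAddMonoid E] [PosSMulMono ℝ E] {F : Type*} [AddCommGroup F] [Module ℝ F]

def LinearMap.ofCone (m : E → F) (hadd : ∀ x y, 0 ≤ x → 0 ≤ y → m (x + y) = m x + m y)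
    (hsmul : ∀ (c : ℝ) x, 0 ≤ c → 0 ≤ x → m (c • x) = c • m x) : E →ₗ[ℝ] F where
  toFun x := m x⁺ - m x⁻
  map_add' x y := by
    have hxy : x + y = (x⁺ + y⁺) - (x⁻ + y⁻) := by
      rw [add_sub_add_comm, posPart_sub_negPart, posPart_sub_negPart]
    rw [hxy, map_posPart_sub_map_negPart_sub m hadd (add_nonneg (posPart_nonneg x)
      (posPart_nonneg y)) (add_nonneg (negPart_nonneg x) (negPart_nonneg y)),
      hadd _ _ (posPart_nonneg x) (posPart_nonneg y), hadd _ _ (negPart_nonneg x) (negPart_nonneg y)]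
    abel
  map_smul' c x := by
    rcases le_total 0 c with hc | hc
    · have hcx : c • x = c • x⁺ - c • x⁻ := by rw [← smul_sub, posPart_sub_negPart]
      rw [hcx, map_posPart_sub_map_negPart_sub m hadd (smul_nonneg hc (posPart_nonneg x))
        (smul_nonneg hc (negPart_nonneg x)), hsmul _ _ hc (posPart_nonneg x),
        hsmul _ _ hc (negPart_nonneg x), RingHom.id_apply, smul_sub]
    · have hc' : 0 ≤ -c := neg_nonneg.2 hc
      have hcx : c • x = (-c) • x⁻ - (-c) • x⁺ := by
        rw [← smul_sub, neg_smul, ← smul_neg, neg_sub, posPart_sub_negPart]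
      rw [hcx, map_posPart_sub_map_negPart_sub m hadd (smul_nonneg hc' (negPart_nonneg x))
        (smul_nonneg hc' (posPart_nonneg x)), hsmul _ _ hc' (posPart_nonneg x),
        hsmul _ _ hc' (negPart_nonneg x), RingHom.id_apply, smul_sub, neg_smul, neg_smul]
      abel

theorem LinearMap.ofCone_apply_of_nonneg (m : E → F)
    (hadd : ∀ x y, 0 ≤ x → 0 ≤ y → m (x + y) = m x + m y)
    (hsmul : ∀ (c : ℝ) x, 0 ≤ c → 0 ≤ x → m (c • x) = c • m x) {x : E} (hx : 0 ≤ x) :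
    LinearMap.ofCone m hadd hsmul x = m x := by
  have hm0 : m 0 = 0 := by simpa using hadd 0 0 le_rfl le_rfl
  show m x⁺ - m x⁻ = m x
  simpa [hm0] using map_posPart_sub_map_negPart_sub m hadd hx le_rfl

namespace PositiveLinearMap

variable (φ ψ : E →ₚ[ℝ] ℝ)

def inf : E →ₚ[ℝ] ℝ :=
  .mk₀ (LinearMap.ofCone (fun x => sInf (φ.infCandidates ψ x))
      (fun _ _ => sInf_infCandidates_add) (fun _ x hc _ => sInf_infCandidates_smul hc x))
    fun _ hx => by rw [LinearMap.ofCone_apply_of_nonneg _ _ _ hx]; exact sInf_infCandidates_nonneg hx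

variable {φ ψ}

theorem inf_apply_of_nonneg {x : E} (hx : 0 ≤ x) : φ.inf ψ x = sInf (φ.infCandidates ψ x) :=
  LinearMap.ofCone_apply_of_nonneg _ _ _ hx

theorem inf_le_left_of_nonneg {x : E} (hx : 0 ≤ x) : φ.inf ψ x ≤ φ x := by
  simpa [inf_apply_of_nonneg hx] using sInf_infCandidates_le (φ := φ) (ψ := ψ) ⟨hx, le_rfl⟩

theorem inf_le_right_of_nonneg {x : E} (hx : 0 ≤ x) : φ.inf ψ x ≤ ψ x := by
  simpa [inf_apply_of_nonneg hx] using sInf_infCandidates_le (φ := φ) (ψ := ψ) ⟨le_rfl, hx⟩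

theorem inf_map_le_of_nonneg (T : E →ₚ[ℝ] E) (hφ : ∀ x, φ (T x) = φ x)
    (hψ : ∀ x, ψ (T x) = ψ x) {x : E} (hx : 0 ≤ x) : φ.inf ψ (T x) ≤ φ.inf ψ x := by
  rw [inf_apply_of_nonneg hx, inf_apply_of_nonneg (map_nonneg T hx)]
  refine csInf_le_csInf (bddBelow_infCandidates _) (infCandidates_nonempty hx) ?_
  rintro _ ⟨y, ⟨hy, hyx⟩, rfl⟩
  exact ⟨T y, ⟨map_nonneg T hy, OrderHomClass.mono T hyx⟩, by
    simp only [← map_sub, hφ, hψ]⟩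

theorem exists_add_lt_of_inf_lt {x : E} (hx : 0 ≤ x) {r : ℝ} (h : φ.inf ψ x < r) :
    ∃ y ∈ Icc 0 x, φ y + ψ (x - y) < r := by
  rw [inf_apply_of_nonneg hx] at h
  obtain ⟨_, ⟨y, hy, rfl⟩, hlt⟩ := exists_lt_of_csInf_lt (infCandidates_nonempty hx) h
  exact ⟨y, hy, hlt⟩

end PositiveLinearMap

end RieszSpace

namespace Linf

theorem abs_apply_le_norm (x : Linf) (n : ℕ) : |x n| ≤ ‖x‖ :=
  lp.norm_apply_le_norm ENNReal.top_ne_zero x n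

-- The coordinatewise order, which makes `ℓ∞` a Riesz space with order unit `1`; positivity in
-- `IsBanachLimit` is positivity for this order.
instance : Max Linf where
  max x y := ⟨fun n => max (x n) (y n), memℓp_infty ⟨max ‖x‖ ‖y‖, by
    rintro _ ⟨n, rfl⟩
    exact abs_max_le_max_abs_abs.trans (max_le_max (abs_apply_le_norm x n) (abs_apply_le_norm y n))⟩⟩

instance : Min Linf where
  min x y := ⟨fun n => min (x n) (y n), memℓp_infty ⟨max ‖x‖ ‖y‖, by
    rintro _ ⟨n, rfl⟩
    exact abs_min_le_max_abs_abs.trans (max_le_max (abs_apply_le_norm x n) (abs_apply_le_norm y n))⟩⟩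

instance : LE Linf := ⟨fun x y => ∀ n, x n ≤ y n⟩
instance : LT Linf := ⟨fun x y => x ≤ y ∧ ¬ y ≤ x⟩

instance : Lattice Linf :=
  Function.Injective.lattice (fun x : Linf => (⇑x : ℕ → ℝ)) (fun _ _ => lp.ext) Iff.rfl Iff.rfl
    (fun _ _ => rfl) fun _ _ => rfl

instance : IsOrderedAddMonoid Linf where
  add_le_add_left _ _ h c n := by simpa [lp.coeFn_add] using h n

instance : PosSMulMono ℝ Linf where
  smul_le_smul_of_nonneg_left _ ha _ _ h n := by
    simpa [lp.coeFn_smul] using mul_le_mul_of_nonneg_left (h n) ha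

instance : ZeroLEOneClass Linf := ⟨fun n => by simp [lp.infty_coeFn_one]⟩

theorem onesSeq_eq_one : onesSeq = 1 := lp.ext <| by rw [lp.infty_coeFn_one]; rfl

@[simp]
theorem one_apply (n : ℕ) : (1 : Linf) n = 1 := by simp [lp.infty_coeFn_one]

@[simp]
theorem posPart_apply (x : Linf) (n : ℕ) : x⁺ n = max (x n) 0 := rfl

theorem sub_apply (x y : Linf) (n : ℕ) : (x - y) n = x n - y n := rfl

theorem smul_apply (c : ℝ) (x : Linf) (n : ℕ) : (c • x) n = c * x n := rfl

theorem sum_apply {ι : Type*} (s : Finset ι) (f : ι → Linf) (n : ℕ) :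
    (∑ k ∈ s, f k) n = ∑ k ∈ s, f k n := by
  rw [lp.coeFn_sum, Finset.sum_apply]

theorem le_norm_smul_one (x : Linf) : x ≤ ‖x‖ • 1 := fun n => by
  simpa [lp.coeFn_smul, lp.infty_coeFn_one] using (le_abs_self _).trans (abs_apply_le_norm x n)

theorem abs_map_le (f : Linf →ₚ[ℝ] ℝ) (x : Linf) : |f x| ≤ f 1 * ‖x‖ := by
  have h₁ := OrderHomClass.mono f (le_norm_smul_one x)
  have h₂ := OrderHomClass.mono f (le_norm_smul_one (-x))
  rw [norm_neg, map_neg] at h₂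
  rw [map_smul, smul_eq_mul] at h₁ h₂
  exact abs_le.2 ⟨by linarith, by linarith⟩

def toStrongDual (f : Linf →ₚ[ℝ] ℝ) : StrongDual ℝ Linf :=
  f.toLinearMap.mkContinuous (f 1) fun x => abs_map_le f x

theorem eq_of_le_of_map_one_eq {f g : Linf →ₗ[ℝ] ℝ} (hle : ∀ x, 0 ≤ x → f x ≤ g x)
    (h1 : f 1 = g 1) : f = g := by
  ext x
  have := abs_map_le (.mk₀ (g - f) fun x hx => sub_nonneg.2 (hle x hx)) x
  change |(g - f) x| ≤ (g - f) 1 * ‖x‖ at this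
  rw [LinearMap.sub_apply, LinearMap.sub_apply, h1, sub_self, zero_mul, abs_nonpos_iff,
    sub_eq_zero] at this
  exact this.symm

def shift : Linf →ₚ[ℝ] Linf :=
  .mk₀ { toFun := shiftSeq, map_add' := fun _ _ => rfl, map_smul' := fun _ _ => rfl }
    fun _ hx n => hx (n + 1)

theorem shift_apply (x : Linf) : shift x = shiftSeq x := rfl

@[simp]
theorem shift_one : shift 1 = 1 := lp.ext <| by
  ext n
  simp [shift_apply, shiftSeq]

end Linf

namespace IsBanachLimit

variable {L : StrongDual ℝ Linf}

theorem map_nonneg (hL : IsBanachLimit L) {x : Linf} (hx : 0 ≤ x) : 0 ≤ L x := hL.1 x hx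

theorem map_shiftSeq (hL : IsBanachLimit L) (x : Linf) : L (shiftSeq x) = L x := hL.2.1 x

theorem map_one (hL : IsBanachLimit L) : L 1 = 1 := Linf.onesSeq_eq_one ▸ hL.2.2

def toPositiveLinearMap (hL : IsBanachLimit L) : Linf →ₚ[ℝ] ℝ :=
  .mk₀ L.toLinearMap fun _ => hL.map_nonneg

@[simp]
theorem toPositiveLinearMap_apply (hL : IsBanachLimit L) (x : Linf) :
    hL.toPositiveLinearMap x = L x := rfl

theorem monotone (hL : IsBanachLimit L) : Monotone L := fun _ _ h => by
  simpa using hL.map_nonneg (sub_nonneg.2 h)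

theorem norm_le_one (hL : IsBanachLimit L) : ‖L‖ ≤ 1 :=
  L.opNorm_le_bound zero_le_one fun x => by
    simpa [hL.map_one] using Linf.abs_map_le hL.toPositiveLinearMap x

end IsBanachLimit

theorem isBanachLimit_inv_smul {ν : StrongDual ℝ Linf} (hpos : ∀ x, 0 ≤ x → 0 ≤ ν x)
    (hshift : ∀ x, ν (shiftSeq x) = ν x) (h1 : 0 < ν 1) : IsBanachLimit ((ν 1)⁻¹ • ν) := by
  refine ⟨fun x hx => ?_, fun x => ?_, ?_⟩
  · simpa using mul_nonneg (inv_nonneg.2 h1.le) (hpos x hx)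
  · simpa using congrArg ((ν 1)⁻¹ * ·) (hshift x)
  · simp [Linf.onesSeq_eq_one, h1.ne']

theorem IsBanachLimit.eq_inv_smul_of_le {L ν : StrongDual ℝ Linf}
    (hL : L ∈ extremePoints ℝ {L | IsBanachLimit L}) (hpos : ∀ x, 0 ≤ x → 0 ≤ ν x)
    (hshift : ∀ x, ν (shiftSeq x) = ν x) (hle : ∀ x, 0 ≤ x → ν x ≤ L x) (hν : 0 < ν 1) :
    L = (ν 1)⁻¹ • ν := by
  have hL1 : L 1 = 1 := hL.1.map_one
  rcases (hL1 ▸ hle 1 zero_le_one).eq_or_lt with hc | hc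
  · rw [hc, inv_one, one_smul]
    exact ContinuousLinearMap.coe_injective
      (Linf.eq_of_le_of_map_one_eq (f := ν.toLinearMap) hle (hc.trans hL1.symm)).symm
  · have hd : 0 < (L - ν) 1 := by simpa [hL1] using hc
    have hseg : L ∈ openSegment ℝ ((ν 1)⁻¹ • ν) (((L - ν) 1)⁻¹ • (L - ν)) := by
      refine ⟨ν 1, (L - ν) 1, hν, hd, by simp [hL1], ?_⟩
      ext x
      have : 1 - ν 1 ≠ 0 := (sub_pos.2 hc).ne'
      simp only [sub_apply, hL1, add_apply, smul_apply, smul_eq_mul]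
      field_simp
      ring
    exact (hL.2 (isBanachLimit_inv_smul hpos hshift hν)
      (isBanachLimit_inv_smul (fun x hx => sub_nonneg.2 (hle x hx))
        (fun x => by simp [hL.1.map_shiftSeq, hshift]) hd) hseg).symm

theorem exists_separating_of_extreme_of_ne {φ ψ : StrongDual ℝ Linf}
    (hφ : φ ∈ extremePoints ℝ {L | IsBanachLimit L})
    (hψ : ψ ∈ extremePoints ℝ {L | IsBanachLimit L}) (hne : φ ≠ ψ) {δ : ℝ} (hδ : 0 < δ) :
    ∃ w ∈ Icc (0 : Linf) 1, 1 - δ < φ w ∧ ψ w < δ := by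
  set ν := hφ.1.toPositiveLinearMap.inf hψ.1.toPositiveLinearMap
  have hνle : ∀ x, 0 ≤ x → ν (Linf.shift x) ≤ ν x := fun _ hx =>
    PositiveLinearMap.inf_map_le_of_nonneg Linf.shift (fun y => hφ.1.map_shiftSeq y)
      (fun y => hψ.1.map_shiftSeq y) hx
  have hνshift : ∀ x, ν (shiftSeq x) = ν x := fun x =>
    LinearMap.congr_fun (Linf.eq_of_le_of_map_one_eq (f := (ν.comp Linf.shift).toLinearMap)
      (g := ν.toLinearMap) hνle (by simp [Linf.shift_one])) x
  have hν1 : ν 1 = 0 := by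
    by_contra h
    have hpos : 0 < ν 1 := (map_nonneg ν zero_le_one).lt_of_ne' h
    apply hne
    rw [IsBanachLimit.eq_inv_smul_of_le (ν := Linf.toStrongDual ν) hφ
        (fun _ hx => map_nonneg ν hx) hνshift
        (fun _ hx => PositiveLinearMap.inf_le_left_of_nonneg hx) hpos,
      IsBanachLimit.eq_inv_smul_of_le (ν := Linf.toStrongDual ν) hψ
        (fun _ hx => map_nonneg ν hx) hνshift
        (fun _ hx => PositiveLinearMap.inf_le_right_of_nonneg hx) hpos]
  obtain ⟨y, ⟨hy0, hy1⟩, hlt⟩ :=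
    PositiveLinearMap.exists_add_lt_of_inf_lt zero_le_one (hν1.trans_lt hδ)
  have hφy := hφ.1.map_nonneg hy0
  have hψy := hψ.1.map_nonneg (sub_nonneg.2 hy1)
  simp only [IsBanachLimit.toPositiveLinearMap_apply] at hlt
  refine ⟨1 - y, ⟨sub_nonneg.2 hy1, sub_le_self _ hy0⟩, ?_, by linarith⟩
  rw [map_sub, hφ.1.map_one]
  linarith

section Separation

variable {ι : Type*} [DecidableEq ι] {B : ι → StrongDual ℝ Linf}

theorem exists_almost_peak (hB : ∀ k, Monotone (B k)) (hB1 : ∀ k, B k 1 = 1) {s : Finset ι}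
    {k : ι} {δ : ℝ} (hδ : 0 ≤ δ)
    (hsep : ∀ j ∈ s, j ≠ k → ∃ w ∈ Icc (0 : Linf) 1, 1 - δ < B k w ∧ B j w < δ) :
    ∃ u ∈ Icc (0 : Linf) 1, 1 - s.card * δ ≤ B k u ∧ ∀ j ∈ s, j ≠ k → B j u ≤ δ := by
  choose! w hw hwk hwj using hsep
  have hw' : ∀ j ∈ s.erase k, 0 ≤ 1 - w j := fun j hj =>
    sub_nonneg.2 (hw j (Finset.mem_of_mem_erase hj) (Finset.ne_of_mem_erase hj)).2
  set g := 1 - ∑ j ∈ s.erase k, (1 - w j)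
  have hgw : ∀ j ∈ s.erase k, g ≤ w j := fun j hj =>
    (sub_le_sub_left (Finset.single_le_sum hw' hj) 1).trans (sub_sub_cancel 1 (w j)).le
  refine ⟨g⁺, ⟨posPart_nonneg g, sup_le (sub_le_self _ (Finset.sum_nonneg hw')) zero_le_one⟩,
    ?_, fun j hj hjk => ?_⟩
  · have hsum : ∑ j ∈ s.erase k, (1 - B k (w j)) ≤ s.card * δ :=
      Finset.sum_erase_le_card_mul hδ fun j hj => by
        linarith [hwk j (Finset.mem_of_mem_erase hj) (Finset.ne_of_mem_erase hj)]
    calc 1 - s.card * δ ≤ B k g := by simp only [g, map_sub, map_sum, hB1]; linarith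
      _ ≤ B k g⁺ := hB k (le_posPart g)
  · have hjs := Finset.mem_erase.2 ⟨hjk, hj⟩
    exact (hB j (sup_le (hgw j hjs) (hw j hj hjk).1)).trans (hwj j hj hjk).le

theorem exists_partition_of_almost_biorthogonal (hB : ∀ k, Monotone (B k)) {s : Finset ι}
    {u : ι → Linf} (hu : ∀ k ∈ s, u k ∈ Icc 0 1) {α δ : ℝ} (hδ : 0 ≤ δ)
    (hdiag : ∀ k ∈ s, 1 - α ≤ B k (u k)) (hoff : ∀ k ∈ s, ∀ j ∈ s, j ≠ k → B k (u j) ≤ δ) :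
    ∃ v : ι → Linf, (∀ k, 0 ≤ v k) ∧ ∑ k ∈ s, v k ≤ 1 ∧
      ∀ k ∈ s, 1 - α - s.card * δ ≤ B k (v k) := by
  refine ⟨fun k => (u k - ∑ j ∈ s.erase k, u j)⁺, fun k => posPart_nonneg _, fun n => ?_,
    fun k hk => ?_⟩
  · rw [Linf.sum_apply, Linf.one_apply]
    simp only [Linf.posPart_apply, Linf.sub_apply, Linf.sum_apply]
    exact Finset.sum_max_sub_sum_erase_le_one s (u := fun k => u k n)
      (fun k hk => (hu k hk).1 n) fun k hk => by simpa using (hu k hk).2 n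
  · have hoffsum : ∑ j ∈ s.erase k, B k (u j) ≤ s.card * δ :=
      Finset.sum_erase_le_card_mul hδ fun j hj =>
        hoff k hk j (Finset.mem_of_mem_erase hj) (Finset.ne_of_mem_erase hj)
    calc 1 - α - s.card * δ ≤ B k (u k) - ∑ j ∈ s.erase k, B k (u j) := by linarith [hdiag k hk]
      _ = B k (u k - ∑ j ∈ s.erase k, u j) := by rw [map_sub, map_sum]
      _ ≤ _ := hB k (le_posPart _)

theorem one_sub_two_mul_sum_abs_le_norm (hB : ∀ k, Monotone (B k)) (hB1 : ∀ k, B k 1 = 1)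
    (s : Finset ι) (a : ι → ℝ) {v : ι → Linf} (hv0 : ∀ k, 0 ≤ v k) (hv1 : ∑ k ∈ s, v k ≤ 1)
    {η : ℝ} (hv : ∀ k ∈ s, 1 - η ≤ B k (v k)) :
    (1 - 2 * η) * ∑ k ∈ s, |a k| ≤ ‖∑ k ∈ s, a k • B k‖ := by
  set σ : ι → ℝ := fun k => if 0 ≤ a k then 1 else -1
  have hσa : ∀ k, a k = |a k| * σ k := fun k => by
    by_cases h : 0 ≤ a k
    · simp [σ, h, abs_of_nonneg h]
    · simp [σ, h, abs_of_neg (not_le.1 h)]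
  have hσσ : ∀ j, σ j * σ j = 1 := fun j => by by_cases h : 0 ≤ a j <;> simp [σ, h]
  have hσabs : ∀ k, |σ k| = 1 := fun k => by by_cases h : 0 ≤ a k <;> simp [σ, h]
  have hBv : ∀ j k, 0 ≤ B j (v k) := fun j k => by simpa using hB j (hv0 k)
  set x := ∑ k ∈ s, σ k • v k
  have hx : ‖x‖ ≤ 1 := by
    refine lp.norm_le_of_forall_le zero_le_one fun n => ?_
    calc ‖x n‖ = |∑ k ∈ s, σ k * v k n| := by
          simp only [x, Real.norm_eq_abs, Linf.sum_apply, Linf.smul_apply]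
      _ ≤ ∑ k ∈ s, v k n := (Finset.abs_sum_le_sum_abs _ _).trans_eq
          (Finset.sum_congr rfl fun k _ => by rw [abs_mul, hσabs, one_mul, abs_of_nonneg (hv0 k n)])
      _ ≤ 1 := by simpa only [Linf.sum_apply, Linf.one_apply] using hv1 n
  -- `σ j • x` dominates `v j` minus the other `v k`, whose total mass under `B j` is at most 1
  have hBx : ∀ j ∈ s, 1 - 2 * η ≤ σ j * B j x := fun j hj => by
    have hoff : ∀ k ∈ s.erase j, -B j (v k) ≤ σ j * σ k * B j (v k) := fun k _ => by
      have := neg_abs_le (σ j * σ k * B j (v k))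
      rwa [abs_mul, abs_mul, hσabs, hσabs, one_mul, one_mul, abs_of_nonneg (hBv j k)] at this
    have htot : ∑ k ∈ s, B j (v k) ≤ 1 := by rw [← map_sum, ← hB1 j]; exact hB j hv1
    have hexp : σ j * B j x = ∑ k ∈ s, σ j * σ k * B j (v k) := by
      simp [x, map_sum, Finset.mul_sum, mul_assoc]
    have e1 := Finset.add_sum_erase s (fun k => σ j * σ k * B j (v k)) hj
    have e2 := Finset.add_sum_erase s (fun k => B j (v k)) hj
    have := Finset.sum_le_sum hoff
    rw [Finset.sum_neg_distrib] at this
    simp only [hσσ, one_mul] at e1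
    linarith [hv j hj]
  calc (1 - 2 * η) * ∑ k ∈ s, |a k| = ∑ j ∈ s, |a j| * (1 - 2 * η) := by
        rw [Finset.mul_sum]; simp only [mul_comm]
    _ ≤ ∑ j ∈ s, |a j| * (σ j * B j x) :=
        Finset.sum_le_sum fun j hj => mul_le_mul_of_nonneg_left (hBx j hj) (abs_nonneg _)
    _ = (∑ k ∈ s, a k • B k) x := by
        simp only [sum_apply, smul_apply, smul_eq_mul]
        exact Finset.sum_congr rfl fun j _ => by rw [← mul_assoc, ← hσa j]
    _ ≤ ‖∑ k ∈ s, a k • B k‖ :=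
        (Real.le_norm_self _).trans (((∑ k ∈ s, a k • B k).le_opNorm x).trans
          (mul_le_of_le_one_right (norm_nonneg _) hx))

theorem sum_abs_le_norm_sum_smul (hB : ∀ k, Monotone (B k)) (hB1 : ∀ k, B k 1 = 1)
    (s : Finset ι)
    (hsep : ∀ k ∈ s, ∀ j ∈ s, k ≠ j → ∀ δ > 0, ∃ w ∈ Icc (0 : Linf) 1, 1 - δ < B k w ∧ B j w < δ)
    (a : ι → ℝ) : ∑ k ∈ s, |a k| ≤ ‖∑ k ∈ s, a k • B k‖ := by
  refine le_of_forall_pos_one_sub_mul_le fun η hη => ?_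
  set δ := η / (4 * s.card + 1)
  have hδ : 0 < δ := by positivity
  choose! u hu hdiag hoff using fun k (hk : k ∈ s) =>
    exists_almost_peak hB hB1 hδ.le fun j hj hjk => hsep k hk j hj hjk.symm δ hδ
  obtain ⟨v, hv0, hv1, hv⟩ := exists_partition_of_almost_biorthogonal hB hu hδ.le hdiag
    fun k hk j hj hjk => hoff j hj k hk hjk.symm
  have hv' : ∀ k ∈ s, 1 - 2 * s.card * δ ≤ B k (v k) := fun k hk => by linarith [hv k hk]
  refine le_trans (mul_le_mul_of_nonneg_right ?_ (Finset.sum_nonneg fun _ _ => abs_nonneg _))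
    (one_sub_two_mul_sum_abs_le_norm hB hB1 s a hv0 hv1 hv')
  have : 4 * s.card * δ ≤ η := by
    rw [mul_div_assoc', div_le_iff₀ (by positivity)]
    nlinarith
  linarith

end Separation

theorem extreme_banachLimits_one_equivalent_l1_basis
    (B : ℕ → StrongDual ℝ Linf)
    (hB : ∀ k, B k ∈ Set.extremePoints ℝ {L : StrongDual ℝ Linf | IsBanachLimit L})
    (hinj : Function.Injective B) :
    ∀ (n : ℕ) (a : ℕ → ℝ),
      ‖∑ k ∈ Finset.range n, a k • B k‖ = ∑ k ∈ Finset.range n, |a k| := by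
  intro n a
  refine le_antisymm ?_ (sum_abs_le_norm_sum_smul (fun k => (hB k).1.monotone)
    (fun k => (hB k).1.map_one) _ (fun k _ j _ hkj _ hδ =>
      exists_separating_of_extreme_of_ne (hB k) (hB j) (hinj.ne hkj) hδ) a)
  calc ‖∑ k ∈ Finset.range n, a k • B k‖ ≤ ∑ k ∈ Finset.range n, ‖a k • B k‖ := norm_sum_le _ _
    _ ≤ ∑ k ∈ Finset.range n, |a k| := Finset.sum_le_sum fun k _ => by
      rw [norm_smul, Real.norm_eq_abs]
      exact mul_le_of_le_one_right (abs_nonneg _) (hB k).1.norm_le_one
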